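/- Consider a Metropolis–Hastings kernel on a finite state space with target π(X) ∝ π(Y|X)π(X|θ) and proposal mechanism whose density factors as q(X*|X) = q(U|X)q(U*|U)q(X*|U*) with π(X|θ)q(U|X) = 1 for all X and deterministic final step. Then acceptance probability α(X,X*) = min{1, [π(Y|X*)/π(Y|X)]·[q(U|U*)/q(U*|U)]} makes the chain satisfy detailed balance with respect to the posterior π(X|Y) ∝ π(Y|X)π(X|θ). -/
import Mathlib

lemma aux_min_mul (a b c d : ℝ) (ha : 0 < a) (hb : 0 < b) :
    a * b * min 1 ((c / a) * (d / b)) = min (a * b) (c * d) := by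
  rw [mul_min_of_nonneg _ _ (le_of_lt (mul_pos ha hb)), mul_one]
  congr 1
  field_simp

theorem stmt_14 {S : Type*} [Fintype S]
    (πY πθ qU : S → ℝ) (r : S → S → ℝ)
    (hπY : ∀ X, 0 < πY X) (hπθ : ∀ X, 0 < πθ X)
    (hqU : ∀ X, 0 < qU X) (hr : ∀ X Xs, 0 < r X Xs)
    (hcancel : ∀ X, πθ X * qU X = 1)
    (α : S → S → ℝ)
    (hα : ∀ X Xs, α X Xs = min 1 ((πY Xs / πY X) * (r Xs X / r X Xs)))
    (k : S → S → ℝ)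
    (hk : ∀ X Xs, k X Xs = qU X * r X Xs * α X Xs) :
    ∀ X Xs, (πY X * πθ X) * k X Xs = (πY Xs * πθ Xs) * k Xs X := by
  intro X Xs
  rw [hk, hk, hα, hα]
  have e1 : (πY X * πθ X) * (qU X * r X Xs * min 1 (πY Xs / πY X * (r Xs X / r X Xs)))
      = πY X * r X Xs * min 1 (πY Xs / πY X * (r Xs X / r X Xs)) := by
    linear_combination (πY X * r X Xs * min 1 (πY Xs / πY X * (r Xs X / r X Xs))) * hcancel X
  have e2 : (πY Xs * πθ Xs) * (qU Xs * r Xs X * min 1 (πY X / πY Xs * (r X Xs / r Xs X)))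
      = πY Xs * r Xs X * min 1 (πY X / πY Xs * (r X Xs / r Xs X)) := by
    linear_combination (πY Xs * r Xs X * min 1 (πY X / πY Xs * (r X Xs / r Xs X))) * hcancel Xs
  rw [e1, e2, aux_min_mul _ _ _ _ (hπY X) (hr X Xs),
      aux_min_mul _ _ _ _ (hπY Xs) (hr Xs X), min_comm]
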